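/- arXiv:math/0511172 — 2 statements merged into one kernel-verified Lean document; each statement's English description precedes it below -/
import Mathlib

section
/- Let ξ ∈ 𝔸 with k_∅(ξ)=k>0, let θ be any representative of ξ, and let {ξ¹,…,ξ^k}={𝔭(τ_1θ),…,𝔭(τ_kθ)} be the unordered family of subtrees of ξ above the first generation. Then for every symmetric measurable function F:𝒜^k → ℝ₊, (#𝔭^{-1}(ξ))^{-1} Σ_{θ∈𝔭^{-1}(ξ)} F(τ_1θ,…,τ_kθ) = (#𝔭^{-1}(ξ¹))^{-1}⋯(#𝔭^{-1}(ξ^k))^{-1} Σ_{θ_1∈𝔭^{-1}(ξ¹)}⋯Σ_{θ_k∈𝔭^{-1}(ξ^k)} F(θ_1,…,θ_k). -/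
open MeasureTheory Metric Set
open scoped ENNReal NNReal Topology Classical

noncomputable section

/-! ### Pointed (rooted) compact metric spaces and the Gromov–Hausdorff space -/

/-- A rooted compact metric space. -/
structure PCMS where
  carrier : Type
  met : MetricSpace carrier
  cpt : CompactSpace carrier
  root : carrier

attribute [instance] PCMS.met PCMS.cpt

instance (X : PCMS) : Nonempty X.carrier := ⟨X.root⟩

/-- Two rooted compact metric spaces are equivalent if there is a root-preserving
isometry mapping one onto the other. -/
instance pcmsSetoid : Setoid PCMS where
  r X Y := ∃ e : X.carrier ≃ᵢ Y.carrier, e X.root = Y.root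
  iseqv := by
    refine ⟨fun X => ⟨IsometryEquiv.refl _, rfl⟩, ?_, ?_⟩
    · rintro X Y ⟨e, he⟩
      exact ⟨e.symm, by rw [← he, IsometryEquiv.symm_apply_apply]⟩
    · rintro X Y Z ⟨e, he⟩ ⟨f, hf⟩
      exact ⟨e.trans f, by simp [IsometryEquiv.trans_apply, he, hf]⟩

/-- The space of equivalence classes of rooted compact metric spaces. -/
abbrev MT := Quotient pcmsSetoid

def PCMS.toMT (X : PCMS) : MT := Quotient.mk pcmsSetoid X

/-- The pointed Gromov–Hausdorff distance: infimum, over all isometric embeddings of the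
two spaces into a common metric space, of the maximum of the Hausdorff distance between
the images and the distance between the images of the roots. -/
def pghDist (X Y : PCMS) : ℝ :=
  sInf { r : ℝ |
    ∃ (E : Type) (_ : MetricSpace E) (f : X.carrier → E) (g : Y.carrier → E),
      Isometry f ∧ Isometry g ∧
      max (hausdorffDist (Set.range f) (Set.range g)) (dist (f X.root) (g Y.root)) ≤ r }

/-- The pointed Gromov–Hausdorff distance on equivalence classes. -/
def mGH (x y : MT) : ℝ := pghDist x.out y.out

/-- The Borel σ-field of the pointed Gromov–Hausdorff distance. -/
instance : MeasurableSpace MT :=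
  MeasurableSpace.generateFrom { s : Set MT | ∃ y r, s = { x | mGH x y < r } }

/-- The height of a rooted compact metric space: the maximal distance from the root. -/
def PCMS.height (X : PCMS) : ℝ := ⨆ σ : X.carrier, dist X.root σ

/-- The real-tree property: any two points are joined by a unique isometric arc, and any
injective continuous path between them has the same range as this arc. -/
def PCMS.IsRTree (X : PCMS) : Prop :=
  ∀ x y : X.carrier,
    (∃! f : Set.Icc (0 : ℝ) (dist x y) → X.carrier,
        Isometry f ∧ f ⟨0, Set.left_mem_Icc.mpr dist_nonneg⟩ = x ∧
          f ⟨dist x y, Set.right_mem_Icc.mpr dist_nonneg⟩ = y) ∧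
    (∀ f : Set.Icc (0 : ℝ) (dist x y) → X.carrier,
        Isometry f → f ⟨0, Set.left_mem_Icc.mpr dist_nonneg⟩ = x →
        f ⟨dist x y, Set.right_mem_Icc.mpr dist_nonneg⟩ = y →
      ∀ q : Set.Icc (0 : ℝ) 1 → X.carrier, Continuous q → Function.Injective q →
        q ⟨0, Set.left_mem_Icc.mpr zero_le_one⟩ = x →
        q ⟨1, Set.right_mem_Icc.mpr zero_le_one⟩ = y →
        Set.range q = Set.range f)

def IsTreeClass (x : MT) : Prop := ∃ X : PCMS, X.IsRTree ∧ X.toMT = x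

/-- The space `𝕋` of equivalence classes of rooted compact real trees. -/
abbrev TT := { x : MT // IsTreeClass x }

/-- The height `H(𝒯)` of (the class of) a tree. -/
def heightT (T : TT) : ℝ := T.1.out.height

/-! ### Subtrees above a level -/

def levelGT (X : PCMS) (t : ℝ) : Set X.carrier := { σ | t < dist X.root σ }

/-- The connected components of the part of `X` strictly above level `t`. -/
def comps (X : PCMS) (t : ℝ) : Set (Set X.carrier) :=
  { C | ∃ σ ∈ levelGT X t, C = connectedComponentIn (levelGT X t) σ }

/-- The common ancestor at level `t` of a component `C`: the point of the closure of `C`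
at distance `t` from the root. -/
def anchor (X : PCMS) (t : ℝ) (C : Set X.carrier) : X.carrier :=
  Classical.epsilon fun a => a ∈ closure C ∧ dist X.root a = t

/-- The subtree corresponding to a connected component `C` above level `t`, rooted at the
common ancestor of `C` at level `t`. -/
def subPCMS (X : PCMS) (t : ℝ) (C : Set X.carrier) : PCMS where
  carrier := ↥(closure C ∪ {anchor X t C})
  met := inferInstance
  cpt := isCompact_iff_compactSpace.mp
    ((isClosed_closure.union isClosed_singleton).isCompact)
  root := ⟨anchor X t C, Set.mem_union_right _ rfl⟩

/-- The components above level `t` whose subtree has height `> h`. -/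
def bigComps (X : PCMS) (t h : ℝ) : Set (Set X.carrier) :=
  { C | C ∈ comps X t ∧ h < (subPCMS X t C).height }

/-- `Z(t,t+h)`: the number of subtrees above level `t` with height `> h`
(with the convention `Z(0,h) = 𝟙{H > h}`). -/
def Zp (X : PCMS) (t h : ℝ) : ℕ :=
  if t = 0 then (if h < X.height then 1 else 0) else (bigComps X t h).ncard

def ZT (T : TT) (t h : ℝ) : ℕ := Zp T.1.out t h

/-- An arbitrary enumeration of a collection of `p` subsets. -/
def enumSet (X : PCMS) (S : Set (Set X.carrier)) (p : ℕ) : Fin p → Set X.carrier :=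
  fun i => if hn : Nonempty (Fin p ≃ ↥S) then ((Classical.choice hn) i : Set X.carrier) else ∅

/-- An enumeration of (the classes of) the subtrees of `X` above level `t` with
height `> h`. -/
def subtreesVec (X : PCMS) (t h : ℝ) (p : ℕ) : Fin p → MT :=
  fun i => (subPCMS X t (enumSet X (bigComps X t h) p i)).toMT

def subtreesVecT (T : TT) (t h : ℝ) (p : ℕ) : Fin p → MT := subtreesVec T.1.out t h p

/-- An enumeration of (the classes of) all the subtrees of `T` above level `t`. -/
def allSubtreesVecT (T : TT) (t : ℝ) (p : ℕ) : Fin p → MT :=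
  fun i => (subPCMS T.1.out t (enumSet T.1.out (comps T.1.out t) p i)).toMT

/-! ### Conditioned measures and the regenerative property -/

/-- The conditioned measure `μ(· | s)`. -/
def condOn {α : Type*} [MeasurableSpace α] (μ : Measure α) (s : Set α) : Measure α :=
  (μ s)⁻¹ • μ.restrict s

/-- The law of `p` i.i.d. samples from `μ`. -/
def iidMeasure {α : Type*} [MeasurableSpace α] (p : ℕ) (μ : Measure α) :
    Measure (Fin p → α) :=
  Measure.pi fun _ => μ

/-- The regenerative property (R): for every `t,h>0` and `p`, under `Θ(· | H > t)` and
conditionally on `{Z(t,t+h) = p}`, the unordered collection of the `p` subtrees above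
level `t` with height `> h` is distributed as `p` i.i.d. samples of `Θ(· | H > h)`;
expressed by testing against all symmetric measurable functionals. -/
def Regenerative (Θ : Measure TT) : Prop :=
  ∀ t h : ℝ, 0 < t → 0 < h → ∀ p : ℕ,
    ∀ F : (Fin p → MT) → ℝ≥0∞, Measurable F →
      (∀ (v : Fin p → MT) (π : Equiv.Perm (Fin p)), F (v ∘ π) = F v) →
      ∫⁻ T in { T : TT | ZT T t h = p }, F (subtreesVecT T t h p)
          ∂(condOn Θ { T | t < heightT T }) =
        condOn Θ { T | t < heightT T } { T : TT | ZT T t h = p } *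
          ∫⁻ v, F v ∂(iidMeasure p ((condOn Θ { T | h < heightT T }).map Subtype.val))

/-- `v(t) = Θ(H(𝒯) > t)`, as a real number. -/
def vOf (Θ : Measure TT) (t : ℝ) : ℝ := (Θ { T | t < heightT T }).toReal

/-! ### Rooted ordered trees and their unordered classes -/

/-- A rooted ordered tree: a finite set of words on `ℕ` containing the empty word,
stable under taking the parent, and in which the children of a vertex `u` are
`u1, …, uk_u` for some `k_u ≥ 0`. -/
def IsOTree (s : Finset (List ℕ)) : Prop :=
  [] ∈ s ∧ (∀ u ∈ s, u ≠ [] → u.dropLast ∈ s) ∧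
    ∀ u ∈ s, ∃ k : ℕ, ∀ j : ℕ, u ++ [j] ∈ s ↔ 1 ≤ j ∧ j ≤ k

/-- The set `𝒜` of rooted ordered trees. -/
abbrev ATree := { s : Finset (List ℕ) // IsOTree s }

instance : MeasurableSpace ATree := ⊤

lemma isOTree_root : IsOTree {([] : List ℕ)} := by
  refine ⟨Finset.mem_singleton_self _, fun u hu hne => ?_, fun u hu => ⟨0, fun j => ?_⟩⟩
  · rw [Finset.mem_singleton] at hu; exact absurd hu hne
  · rw [Finset.mem_singleton] at hu; subst hu
    simp only [List.nil_append, Finset.mem_singleton]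
    constructor
    · intro h; exact absurd h (by simp)
    · rintro ⟨h1, h2⟩; omega

/-- The trivial tree `{∅}`. -/
def rootA : ATree := ⟨{[]}, isOTree_root⟩

/-- `k_u(θ)`: the number of children of the vertex `u` in `θ`. -/
def kA (θ : ATree) (u : List ℕ) : ℕ :=
  (θ.1.filter fun v => v ≠ [] ∧ v.dropLast = u).card

/-- The height `H(θ) = max{|u| : u ∈ θ}` of an ordered tree (`|∅| = 0`). -/
def htA (θ : ATree) : ℕ := θ.1.sup List.length

def shiftSet (s : Finset (List ℕ)) (u : List ℕ) : Finset (List ℕ) :=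
  (s.filter fun w => u <+: w).image fun w => w.drop u.length

/-- The shifted tree `τ_u θ = {v : uv ∈ θ}`. -/
def shiftA (θ : ATree) (u : List ℕ) : ATree :=
  if h : IsOTree (shiftSet θ.1 u) then ⟨_, h⟩ else rootA

/-- Relabelling of words: the `i`-th letter of a word is relabelled by a permutation
depending on the prefix of length `i-1`. -/
def relabelAux (Φ : List ℕ → ℕ → ℕ) : List ℕ → List ℕ → List ℕ
  | _, [] => []
  | pre, j :: rest => Φ pre j :: relabelAux Φ (pre ++ [j]) rest

/-- Equivalence of ordered trees: `θ'` is obtained from `θ` by permuting, at every vertex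
`u` of `θ`, the order of the `k_u(θ)` children. -/
def AEquiv (θ θ' : ATree) : Prop :=
  ∃ Φ : List ℕ → ℕ → ℕ,
    (∀ u ∈ θ.1, Set.BijOn (Φ u) (Set.Icc 1 (kA θ u)) (Set.Icc 1 (kA θ u))) ∧
    θ'.1 = θ.1.image (relabelAux Φ [])

/-- The set `𝔸 = 𝒜/∼` of unordered trees. -/
abbrev AQ := Quot AEquiv

/-- The canonical projection `𝔭 : 𝒜 → 𝔸`. -/
def projA (θ : ATree) : AQ := Quot.mk _ θ

/-- The fiber `𝔭⁻¹(ξ)`. -/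
def fiber (ξ : AQ) : Set ATree := { θ | projA θ = ξ }

/-! ### Galton–Watson trees -/

/-- `Π` is the law of the Galton–Watson tree with offspring distribution `γ`:
the number of children of the root has law `γ`, and conditionally on the root having
`p` children, the `p` shifted trees are i.i.d. with law `Π`. -/
def IsGW (γ : ℕ → ℝ≥0∞) (Q : MeasureTheory.Measure ATree) : Prop :=
  MeasureTheory.IsProbabilityMeasure Q ∧
  (∀ p : ℕ, Q { θ | kA θ [] = p } = γ p) ∧
  ∀ p : ℕ, 0 < γ p → ∀ F : (Fin p → ATree) → ℝ≥0∞, Measurable F →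
    ∫⁻ θ in { θ | kA θ [] = p }, F (fun i => shiftA θ [i.1 + 1]) ∂Q =
      γ p * ∫⁻ g, F g ∂(iidMeasure p Q)

/-- `m`-fold convolution power of a distribution on `ℕ`: the law of the sum of `m`
i.i.d. samples of `μ`. -/
def convPow (μ : ℕ → ℝ≥0∞) : ℕ → ℕ → ℝ≥0∞
  | 0, n => if n = 0 then 1 else 0
  | m + 1, n => ∑ k ∈ Finset.range (n + 1), convPow μ m k * μ (n - k)
/-! ### The real tree coded by a (marked) discrete tree -/

/-- The ambient space `ℓ¹(U)` in which the trees `𝒯^T` are constructed; on the subset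
`𝒯^T`, which is a union of segments each parallel to a coordinate axis, the induced
`ℓ¹` distance coincides with the shortest-path distance. -/
abbrev lpTreeSpace := ↥(lp (fun _ : List ℕ => ℝ) 1)

/-- The canonical basis vector `e_u`. -/
def sgl (u : List ℕ) : lpTreeSpace := lp.single 1 u (1 : ℝ)

/-- The proper prefixes of a word (including the empty word). -/
def properPref (u : List ℕ) : Finset (List ℕ) := u.inits.toFinset.erase u

/-- The point `l_u + s e_u` of the tree coded by the marked tree with edge lengths
`h`, lying on the edge below the vertex `u`, where `l_u = ∑ h_w e_w` over the proper
prefixes `w` of `u`. -/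
def ptv (h : List ℕ → ℝ) (u : List ℕ) (s : ℝ) : lpTreeSpace :=
  (∑ w ∈ properPref u, h w • sgl w) + s • sgl u

/-- The subset `𝒯^T = ⋃_{u ∈ θ} [l_u, l_u + h_u e_u]` of `ℓ¹(U)`. -/
def treeSet (θ : ATree) (h : List ℕ → ℝ) : Set lpTreeSpace :=
  insert 0 (⋃ u ∈ (θ.1 : Set (List ℕ)), (fun s => ptv h u s) '' Set.Icc 0 (h u))

/-- The rooted compact real tree `𝒯^T` coded by the marked tree `T = (θ, {h_u}_{u∈θ})`,
equipped with the shortest-path (i.e. induced `ℓ¹`) metric and rooted at `0`. -/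
def markedPCMS (θ : ATree) (h : List ℕ → ℝ) : PCMS where
  carrier := ↥(treeSet θ h)
  met := inferInstance
  cpt := by
    refine isCompact_iff_compactSpace.mp (IsCompact.insert ?_ 0)
    refine Set.Finite.isCompact_biUnion (θ.1.finite_toSet) fun u _ => ?_
    exact isCompact_Icc.image
      (continuous_const.add ((continuous_id.smul continuous_const)))
  root := ⟨0, Set.mem_insert _ _⟩

/-- The tree `ε·𝒯^θ`: the tree coded by `θ` where every edge is given length `ε`
(the root edge `h_∅ = 0`). -/
def treeOf (ε : ℝ) (θ : ATree) : PCMS :=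
  markedPCMS θ fun u => if u = [] then 0 else ε

/-! ### Discretization `ξ^ε` of a real tree -/

/-- Grafting `k` discrete trees on a common root. -/
def graft (k : ℕ) (f : Fin k → Finset (List ℕ)) : Finset (List ℕ) :=
  {[]} ∪ Finset.univ.biUnion fun i : Fin k => (f i).image fun u => (i.1 + 1) :: u

/-- The inductive construction of `ξ^ε(𝒯)` (with fuel `n`): if `H(𝒯) ≤ 2ε` the tree is
`{∅}`; otherwise graft the discretizations of the subtrees of `𝒯` above level `ε`
with height `> ε`. -/
def discApprox (ε : ℝ) : ℕ → PCMS → Finset (List ℕ)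
  | 0, _ => {[]}
  | n + 1, X =>
    if X.height ≤ 2 * ε then {[]}
    else graft (Zp X ε ε) fun i =>
      discApprox ε n (subPCMS X ε (enumSet X (bigComps X ε ε) (Zp X ε ε) i))

/-- An ordered representative of `ξ^ε(𝒯)`. -/
def xiEpsA (ε : ℝ) (X : PCMS) : ATree :=
  if h : IsOTree (discApprox ε (Nat.ceil (X.height / ε)) X) then ⟨_, h⟩ else rootA

/-- The unordered tree `ξ^ε(𝒯) ∈ 𝔸`. -/
def xiEpsQ (ε : ℝ) (X : PCMS) : AQ := projA (xiEpsA ε X)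
/-! ### Poisson point measures and the local time processes -/

/-- `N` is (a version of) a Poisson point measure `𝒩 = Σ_{i∈I} δ_{𝒯_i}` on `𝕋` with
intensity `Θ`, under the probability measure `P`: each `N ω` is a countable sum of
Dirac masses, `ω ↦ N ω s` is measurable, `N · s` is Poisson with parameter `Θ s` for
`s` of finite intensity, and the counts of disjoint sets are independent. -/
def IsPoissonPM {Ω : Type*} [MeasurableSpace Ω] (P : MeasureTheory.Measure Ω)
    (N : Ω → MeasureTheory.Measure TT) (Θ : MeasureTheory.Measure TT) : Prop :=
  (∀ ω, ∃ (ι : Type) (_ : Countable ι) (f : ι → TT),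
      N ω = MeasureTheory.Measure.sum fun i => MeasureTheory.Measure.dirac (f i)) ∧
  (∀ s : Set TT, MeasurableSet s → Measurable fun ω => N ω s) ∧
  (∀ s : Set TT, MeasurableSet s → Θ s < ∞ → ∀ n : ℕ,
      P { ω | N ω s = n } =
        ENNReal.ofReal (Real.exp (-(Θ s).toReal) * (Θ s).toReal ^ n / n.factorial)) ∧
  (∀ (k : ℕ) (s : Fin k → Set TT), (∀ i, MeasurableSet (s i)) →
      (Pairwise fun i j => Disjoint (s i) (s j)) →
      ProbabilityTheory.iIndepFun (fun i ω => N ω (s i)) P)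

/-- `𝒵(t,t+h) = Σ_{i∈I} Z(t,t+h)(𝒯_i)`, as an extended nonnegative real. -/
def pZ {Ω : Type*} (N : Ω → MeasureTheory.Measure TT) (t h : ℝ) (ω : Ω) : ℝ≥0∞ :=
  ∫⁻ T, (ZT T t h : ℝ≥0∞) ∂(N ω)

/-- `𝒵(t,t+h)` as a real random variable. -/
def calZ {Ω : Type*} (N : Ω → MeasureTheory.Measure TT) (t h : ℝ) (ω : Ω) : ℝ :=
  (pZ N t h ω).toReal

/-- The local time `ℒ_t = Σ_{i∈I} L_t(𝒯_i)` (with `ℒ_0 = 1`). -/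
def calL {Ω : Type*} (N : Ω → MeasureTheory.Measure TT) (L : ℝ → TT → ℝ) (t : ℝ)
    (ω : Ω) : ℝ :=
  if t = 0 then 1 else (∫⁻ T, ENNReal.ofReal (L t T) ∂(N ω)).toReal

/-- The rescaled Galton-Watson processes `Y^n_t = n⁻¹ 𝒳^{η_n}_{[m_n t]}`, where
`m_n = [η_n⁻¹]` and `𝒳^ε_k = 𝒵(kε,(k+1)ε)`. -/
def Yproc {Ω : Type*} (N : Ω → MeasureTheory.Measure TT) (η : ℕ → ℝ) (n : ℕ) (t : ℝ)
    (ω : Ω) : ℝ :=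
  calZ N ((Nat.floor (((Nat.floor ((η n)⁻¹) : ℕ) : ℝ) * t) : ℕ) * η n) (η n) ω / n

/-- The set of positive dyadic numbers. -/
def Ddy : Set ℝ := { x | ∃ k n : ℕ, 1 ≤ k ∧ x = (k : ℝ) / 2 ^ n }

/-- The dyadic filtration `𝒢_t = σ(ℒ_s, s ∈ D, s ≤ t)`. -/
def GfilD {Ω : Type*} [MeasurableSpace Ω] (N : Ω → MeasureTheory.Measure TT)
    (L : ℝ → TT → ℝ) (t : ℝ) : MeasurableSpace Ω :=
  ⨆ (s : ℝ) (_ : s ∈ Ddy) (_ : s ≤ t),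
    MeasurableSpace.comap (calL N L s) (inferInstance : MeasurableSpace ℝ)

/-- The exponential distribution with parameter `a`. -/
def expMeasure (a : ℝ) : MeasureTheory.Measure ℝ :=
  MeasureTheory.volume.withDensity fun x =>
    ENNReal.ofReal (if 0 ≤ x then a * Real.exp (-(a * x)) else 0)

/-! ### Truncation, number of individuals at a level, and the filtration `ℱ_t` -/

/-- The truncated tree `𝒯_{≤t} = {σ ∈ 𝒯 : d(ρ,σ) ≤ t}`. -/
def truncPCMS (X : PCMS) (t : ℝ) : PCMS where
  carrier := ↥({ σ : X.carrier | dist X.root σ ≤ t } ∪ {X.root})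
  met := inferInstance
  cpt := isCompact_iff_compactSpace.mp
    (((isClosed_le (continuous_const.dist continuous_id) continuous_const).union
      isClosed_singleton).isCompact)
  root := ⟨X.root, Set.mem_union_right _ rfl⟩

/-- The σ-field on `𝕋` generated by `𝒯 ↦ 𝒯_{≤t}`, completed with respect to `Θ`. -/
def Ffil (Θ : MeasureTheory.Measure TT) (t : ℝ) : MeasurableSpace TT :=
  MeasurableSpace.comap (fun T : TT => (truncPCMS T.1.out t).toMT)
      (inferInstance : MeasurableSpace MT) ⊔
    MeasurableSpace.generateFrom
      { s : Set TT | ∃ n : Set TT, MeasurableSet n ∧ Θ n = 0 ∧ s ⊆ n }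

/-- `N_t(𝒯) = #{σ ∈ 𝒯 : d(ρ,σ) = t}`, the number of individuals of `𝒯` at level `t`. -/
def Ncount (T : TT) (t : ℝ) : ℕ :=
  { σ : T.1.out.carrier | dist T.1.out.root σ = t }.ncard

/-!
Grafting identifies the fiber `𝔭⁻¹(ξ)` with the set of `k`-tuples of ordered trees whose
classes are a rearrangement of `(ξ¹, …, ξᵏ)`: an equivalence of ordered trees permutes the
children of the root and acts by equivalences on the subtrees above them, and conversely.
Counting the pairs `(σ, g)` with `𝔭(gᵢ) = ξ^{σ(i)}` in two ways — each admissible tuple `g`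
occurs with exactly `#Stab(ξ)` permutations, while for fixed `σ` the tuples form a copy of
`𝔭⁻¹(ξ¹) × ⋯ × 𝔭⁻¹(ξᵏ)` — gives, for symmetric `F`,
`#Stab(ξ) · Σ_{rearrangements} F = k! · Σ_{product} F`. For `F = 1` this relates the two
cardinalities, and dividing yields the equality of the averages.
-/

lemma ENNReal.tsum_const_of_finite {γ : Type*} [Finite γ] (c : ℝ≥0∞) :
    ∑' _ : γ, c = Nat.card γ * c := by
  simp [ENNReal.tsum_const, ENat.card_eq_coe_natCard]

section PermFiber

variable {ι α β : Type*} (p : β → α) (ξ : ι → α)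

def permFiber : Set (ι → β) := {g | ∃ σ : Equiv.Perm ι, ∀ i, p (g i) = ξ (σ i)}

lemma card_perm_fiber_eq_card_stabilizer {g : ι → β} {σ₀ : Equiv.Perm ι}
    (hσ₀ : ∀ i, p (g i) = ξ (σ₀ i)) :
    Nat.card {σ : Equiv.Perm ι // ∀ i, p (g i) = ξ (σ i)} =
      Nat.card {σ : Equiv.Perm ι // ξ ∘ σ = ξ} :=
  Nat.card_congr <| Equiv.subtypeEquiv (Equiv.mulRight σ₀⁻¹) fun σ => by
    simp only [hσ₀, Equiv.coe_mulRight, Equiv.Perm.coe_mul]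
    constructor
    · intro h
      funext j
      simpa using (h (σ₀⁻¹ j)).symm
    · intro h i
      simpa using (congrFun h (σ₀ i)).symm

variable {p ξ}

lemma tsum_eq_tsum_pi_fiber (σ : Equiv.Perm ι) (F : (ι → β) → ℝ≥0∞)
    (hF : ∀ (g : ι → β) (σ : Equiv.Perm ι), F (g ∘ σ) = F g) :
    ∑' g : {g : ι → β // ∀ i, p (g i) = ξ (σ i)}, F g =
      ∑' g : (∀ i, {b | p b = ξ i}), F fun i => g i := by
  let e : (∀ i, {b | p b = ξ i}) ≃ {g : ι → β // ∀ i, p (g i) = ξ (σ i)} :=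
    { toFun := fun g => ⟨fun i => g (σ i), fun i => (g (σ i)).2⟩
      invFun := fun g i => ⟨g.1 (σ.symm i), by simpa using g.2 (σ.symm i)⟩
      left_inv := fun g => funext fun i =>
        Subtype.ext (congrArg (fun j => (g j).1) (σ.apply_symm_apply i))
      right_inv := fun g => Subtype.ext (funext fun i => by simp) }
  rw [← e.tsum_eq]
  exact tsum_congr fun g => hF (fun i => (g i).1) σ

variable (p ξ) [Fintype ι]

lemma finite_permFiber (hfin : ∀ i, {b | p b = ξ i}.Finite) : (permFiber p ξ).Finite :=
  (Set.finite_iUnion fun σ : Equiv.Perm ι => Set.Finite.pi fun i => hfin (σ i)).subset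
    fun _ ⟨σ, hσ⟩ => Set.mem_iUnion.2 ⟨σ, fun i _ => hσ i⟩

theorem card_stabilizer_mul_tsum_permFiber (F : (ι → β) → ℝ≥0∞)
    (hF : ∀ (g : ι → β) (σ : Equiv.Perm ι), F (g ∘ σ) = F g) :
    Nat.card {σ : Equiv.Perm ι // ξ ∘ σ = ξ} * ∑' g : permFiber p ξ, F g =
      Nat.card (Equiv.Perm ι) * ∑' g : (∀ i, {b | p b = ξ i}), F fun i => g i := by
  let T := {x : Equiv.Perm ι × (ι → β) // ∀ i, p (x.2 i) = ξ (x.1 i)}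
  let byTuple : T ≃ Σ g : permFiber p ξ, {σ : Equiv.Perm ι // ∀ i, p (g.1 i) = ξ (σ i)} :=
    { toFun := fun x => ⟨⟨x.1.2, x.1.1, x.2⟩, x.1.1, x.2⟩
      invFun := fun s => ⟨(s.2.1, s.1.1), s.2.2⟩
      left_inv := fun _ => rfl
      right_inv := fun _ => rfl }
  let byPerm := Equiv.subtypeProdEquivSigmaSubtype fun (σ : Equiv.Perm ι) (g : ι → β) =>
    ∀ i, p (g i) = ξ (σ i)
  calc _ = ∑' g : permFiber p ξ, ∑' _ : {σ : Equiv.Perm ι // ∀ i, p (g.1 i) = ξ (σ i)}, F g := by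
        rw [← ENNReal.tsum_mul_left]
        refine tsum_congr fun g => ?_
        obtain ⟨σ₀, hσ₀⟩ := g.2
        rw [ENNReal.tsum_const_of_finite, card_perm_fiber_eq_card_stabilizer p ξ hσ₀]
    _ = ∑' x : T, F x.1.2 := by
        rw [← byTuple.symm.tsum_eq]
        exact (ENNReal.tsum_sigma' fun s => F (byTuple.symm s).1.2).symm
    _ = ∑' σ : Equiv.Perm ι, ∑' g : {g : ι → β // ∀ i, p (g i) = ξ (σ i)}, F g := by
        rw [← byPerm.symm.tsum_eq]
        exact ENNReal.tsum_sigma' fun s => F (byPerm.symm s).1.2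
    _ = _ := by
        simp_rw [tsum_eq_tsum_pi_fiber _ F hF]
        exact ENNReal.tsum_const_of_finite _

theorem inv_ncard_mul_tsum_permFiber (hfin : ∀ i, {b | p b = ξ i}.Finite)
    (F : (ι → β) → ℝ≥0∞) (hF : ∀ (g : ι → β) (σ : Equiv.Perm ι), F (g ∘ σ) = F g) :
    ((permFiber p ξ).ncard : ℝ≥0∞)⁻¹ * ∑' g : permFiber p ξ, F g =
      (∏ i, ({b | p b = ξ i}.ncard : ℝ≥0∞)⁻¹) * ∑' g : (∀ i, {b | p b = ξ i}), F fun i => g i := by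
  have : ∀ i, Finite {b | p b = ξ i} := fun i => (hfin i).to_subtype
  have := (finite_permFiber p ξ hfin).to_subtype
  have : Nonempty {σ : Equiv.Perm ι // ξ ∘ σ = ξ} := ⟨⟨1, rfl⟩⟩
  set nStab : ℝ≥0∞ := (Nat.card {σ : Equiv.Perm ι // ξ ∘ σ = ξ} : ℝ≥0∞)
  set nPerm : ℝ≥0∞ := (Nat.card (Equiv.Perm ι) : ℝ≥0∞)
  have hcard := card_stabilizer_mul_tsum_permFiber p ξ (fun _ => 1) fun _ _ => rfl
  simp only [ENNReal.tsum_const_of_finite, mul_one, Nat.card_pi, Nat.card_coe_set_eq,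
    Nat.cast_prod] at hcard
  calc ((permFiber p ξ).ncard : ℝ≥0∞)⁻¹ * ∑' g : permFiber p ξ, F g
      = (nStab * ∑' g : permFiber p ξ, F g) / (nStab * (permFiber p ξ).ncard) := by
        rw [ENNReal.mul_div_mul_left _ _ (Nat.cast_ne_zero.2 Nat.card_pos.ne')
          (ENNReal.natCast_ne_top _), ENNReal.div_eq_inv_mul]
    _ = (nPerm * ∑' g : (∀ i, {b | p b = ξ i}), F fun i => g i) /
          (nPerm * ∏ i, ({b | p b = ξ i}.ncard : ℝ≥0∞)) := by
        rw [card_stabilizer_mul_tsum_permFiber p ξ F hF, hcard]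
    _ = _ := by
        rw [ENNReal.mul_div_mul_left _ _ (Nat.cast_ne_zero.2 Nat.card_pos.ne')
          (ENNReal.natCast_ne_top _), ENNReal.div_eq_inv_mul,
          ENNReal.prod_inv_distrib fun _ _ _ _ _ => Or.inr (ENNReal.natCast_ne_top _)]

end PermFiber

lemma exists_fin_val_add_one_eq {k b : ℕ} (hb : 1 ≤ b ∧ b ≤ k) : ∃ i : Fin k, i.1 + 1 = b :=
  ⟨⟨b - 1, by omega⟩, by simp only; omega⟩

section OrderedTree

lemma mem_of_prefix (θ : ATree) {u v : List ℕ} (hu : u ∈ θ.1) (hv : v <+: u) : v ∈ θ.1 := by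
  induction u using List.reverseRecOn generalizing v with
  | nil => rwa [List.prefix_nil.mp hv]
  | append_singleton l a ih =>
    rcases List.prefix_concat_iff.mp hv with rfl | hv
    · exact hu
    · exact ih (by simpa using θ.2.2.1 _ hu (by simp)) hv

lemma kA_eq_of_forall_mem_iff (θ : ATree) {u : List ℕ} {m : ℕ}
    (h : ∀ j, u ++ [j] ∈ θ.1 ↔ 1 ≤ j ∧ j ≤ m) : kA θ u = m := by
  have hchildren : θ.1.filter (fun v => v ≠ [] ∧ v.dropLast = u) =
      (Finset.Icc 1 m).image (u ++ [·]) := by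
    ext v
    simp only [Finset.mem_filter, Finset.mem_image, Finset.mem_Icc]
    constructor
    · rintro ⟨hv, hne, rfl⟩
      refine ⟨v.getLast hne, (h _).1 ?_, List.dropLast_append_getLast hne⟩
      rwa [List.dropLast_append_getLast hne]
    · rintro ⟨j, hj, rfl⟩
      exact ⟨(h j).2 hj, by simp, List.dropLast_concat⟩
  rw [kA, hchildren, Finset.card_image_of_injective _ fun a b hab => by simpa using hab,
    Nat.card_Icc, Nat.add_sub_cancel]

lemma mem_append_singleton_iff (θ : ATree) {u : List ℕ} (hu : u ∈ θ.1) (j : ℕ) :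
    u ++ [j] ∈ θ.1 ↔ 1 ≤ j ∧ j ≤ kA θ u := by
  obtain ⟨m, hm⟩ := θ.2.2.2 u hu
  rw [kA_eq_of_forall_mem_iff θ hm]
  exact hm j

lemma singleton_mem_iff (θ : ATree) (j : ℕ) : [j] ∈ θ.1 ↔ 1 ≤ j ∧ j ≤ kA θ [] :=
  mem_append_singleton_iff θ θ.2.1 j

lemma mem_shiftSet {s : Finset (List ℕ)} {u v : List ℕ} : v ∈ shiftSet s u ↔ u ++ v ∈ s := by
  simp only [shiftSet, Finset.mem_image, Finset.mem_filter]
  constructor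
  · rintro ⟨_, ⟨hw, t, rfl⟩, rfl⟩
    simpa using hw
  · exact fun h => ⟨u ++ v, ⟨h, v, rfl⟩, by simp⟩

lemma isOTree_shiftSet (θ : ATree) {u : List ℕ} (hu : u ∈ θ.1) : IsOTree (shiftSet θ.1 u) := by
  refine ⟨mem_shiftSet.2 (by simpa using hu), fun v hv hne => ?_, fun v hv => ?_⟩
  · rw [mem_shiftSet] at hv ⊢
    simpa [List.dropLast_append_of_ne_nil hne] using θ.2.2.1 _ hv (by simp [hne])
  · obtain ⟨m, hm⟩ := θ.2.2.2 _ (mem_shiftSet.1 hv)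
    exact ⟨m, fun j => by rw [mem_shiftSet, ← List.append_assoc, hm]⟩

lemma mem_shiftA (θ : ATree) {u : List ℕ} (hu : u ∈ θ.1) (v : List ℕ) :
    v ∈ (shiftA θ u).1 ↔ u ++ v ∈ θ.1 := by
  rw [shiftA, dif_pos (isOTree_shiftSet θ hu), mem_shiftSet]

lemma kA_shiftA (θ : ATree) {u w : List ℕ} (hw : u ++ w ∈ θ.1) :
    kA (shiftA θ u) w = kA θ (u ++ w) := by
  have hu : u ∈ θ.1 := mem_of_prefix θ hw (List.prefix_append u w)
  refine kA_eq_of_forall_mem_iff _ fun j => ?_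
  rw [mem_shiftA θ hu, ← List.append_assoc, mem_append_singleton_iff θ hw]

end OrderedTree

section Relabel

variable (Φ : List ℕ → ℕ → ℕ)

@[simp] lemma relabelAux_nil (pre : List ℕ) : relabelAux Φ pre [] = [] := rfl

@[simp] lemma relabelAux_cons (pre : List ℕ) (j : ℕ) (rest : List ℕ) :
    relabelAux Φ pre (j :: rest) = Φ pre j :: relabelAux Φ (pre ++ [j]) rest := rfl

@[simp] lemma length_relabelAux (pre u : List ℕ) : (relabelAux Φ pre u).length = u.length := by
  induction u generalizing pre <;> simp [*]

lemma relabelAux_append (pre u v : List ℕ) :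
    relabelAux Φ pre (u ++ v) = relabelAux Φ pre u ++ relabelAux Φ (pre ++ u) v := by
  induction u generalizing pre <;> simp [*]

lemma relabelAux_append_singleton (u : List ℕ) (a : ℕ) :
    relabelAux Φ [] (u ++ [a]) = relabelAux Φ [] u ++ [Φ u a] := by
  simp [relabelAux_append]

lemma relabelAux_append_left (pre q u : List ℕ) :
    relabelAux Φ (pre ++ q) u = relabelAux (fun w => Φ (pre ++ w)) q u := by
  induction u generalizing q with
  | nil => rfl
  | cons j rest ih => simp [← ih]

lemma relabelAux_cons_nil (j : ℕ) (w : List ℕ) :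
    relabelAux Φ [] (j :: w) = Φ [] j :: relabelAux (fun v => Φ (j :: v)) [] w := by
  simpa using relabelAux_append_left Φ [j] [] w

@[simp] lemma relabelAux_id (pre u : List ℕ) : relabelAux (fun _ j => j) pre u = u := by
  induction u generalizing pre <;> simp [*]

lemma relabelAux_relabelAux (Ψ : List ℕ → ℕ → ℕ) (pre u : List ℕ) :
    relabelAux Ψ (relabelAux Φ [] pre) (relabelAux Φ pre u) =
      relabelAux (fun v j => Ψ (relabelAux Φ [] v) (Φ v j)) pre u := by
  induction u generalizing pre with
  | nil => rfl
  | cons j rest ih => simp [← ih, relabelAux_append_singleton]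

variable {Φ}

lemma relabelAux_congr (θ : ATree) {Φ' : List ℕ → ℕ → ℕ}
    (h : ∀ w j, w ++ [j] ∈ θ.1 → Φ w j = Φ' w j) {pre u : List ℕ} (hu : pre ++ u ∈ θ.1) :
    relabelAux Φ pre u = relabelAux Φ' pre u := by
  induction u generalizing pre with
  | nil => rfl
  | cons j rest ih =>
    have hj : pre ++ [j] ∈ θ.1 := mem_of_prefix θ hu ⟨rest, by simp⟩
    simp only [relabelAux_cons, h pre j hj, ih (pre := pre ++ [j]) (by simpa using hu)]

lemma relabelAux_inj_of_mem (θ : ATree) (hΦ : ∀ w ∈ θ.1, Set.InjOn (Φ w) (Set.Icc 1 (kA θ w)))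
    {pre u v : List ℕ} (hu : pre ++ u ∈ θ.1) (hv : pre ++ v ∈ θ.1)
    (h : relabelAux Φ pre u = relabelAux Φ pre v) : u = v := by
  induction u generalizing pre v with
  | nil => simpa using (congrArg List.length h).symm
  | cons a u ih =>
    cases v with
    | nil => simp at h
    | cons b v =>
      have hpre : pre ∈ θ.1 := mem_of_prefix θ hu (List.prefix_append _ _)
      have ha := (mem_append_singleton_iff θ hpre a).1 (mem_of_prefix θ hu ⟨u, by simp⟩)
      have hb := (mem_append_singleton_iff θ hpre b).1 (mem_of_prefix θ hv ⟨v, by simp⟩)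
      simp only [relabelAux_cons, List.cons.injEq] at h
      obtain rfl : a = b := hΦ pre hpre ha hb h.1
      rw [ih (by simpa using hu) (by simpa using hv) h.2]

lemma injOn_relabelAux (θ : ATree) (hΦ : ∀ w ∈ θ.1, Set.InjOn (Φ w) (Set.Icc 1 (kA θ w))) :
    Set.InjOn (relabelAux Φ []) θ.1 :=
  fun _ hu _ hv h => relabelAux_inj_of_mem θ hΦ (by simpa using hu) (by simpa using hv) h

end Relabel

section Equivalence

def IsChildBij (θ : ATree) (Φ : List ℕ → ℕ → ℕ) : Prop :=
  ∀ u ∈ θ.1, Set.BijOn (Φ u) (Set.Icc 1 (kA θ u)) (Set.Icc 1 (kA θ u))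

variable {θ θ' : ATree} {Φ : List ℕ → ℕ → ℕ}

lemma relabelAux_append_singleton_mem_image_iff (hΦ : IsChildBij θ Φ) {u : List ℕ}
    (hu : u ∈ θ.1) (j : ℕ) :
    relabelAux Φ [] u ++ [j] ∈ θ.1.image (relabelAux Φ []) ↔ 1 ≤ j ∧ j ≤ kA θ u := by
  have hchild := mem_append_singleton_iff θ hu
  constructor
  · intro hmem
    obtain ⟨w, hw, hrel⟩ := Finset.mem_image.1 hmem
    obtain rfl | ⟨w, a, rfl⟩ := List.eq_nil_or_concat' w
    · simpa using congrArg List.length hrel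
    rw [relabelAux_append_singleton, List.append_singleton_inj] at hrel
    have hw' : w ∈ θ.1 := mem_of_prefix θ hw (List.prefix_append _ _)
    obtain rfl : w = u :=
      injOn_relabelAux θ (fun w hw => (hΦ w hw).injOn) hw' hu hrel.1
    rw [← hrel.2, ← Set.mem_Icc]
    exact (hΦ w hu).mapsTo ((hchild a).1 hw)
  · intro hj
    obtain ⟨a, ha, rfl⟩ := (hΦ u hu).surjOn (Set.mem_Icc.2 hj)
    exact Finset.mem_image.2 ⟨u ++ [a], (hchild a).2 ha, relabelAux_append_singleton Φ u a⟩

lemma kA_relabelAux (hΦ : IsChildBij θ Φ) (him : θ'.1 = θ.1.image (relabelAux Φ []))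
    {u : List ℕ} (hu : u ∈ θ.1) : kA θ' (relabelAux Φ [] u) = kA θ u :=
  kA_eq_of_forall_mem_iff _ fun j => by
    rw [him]
    exact relabelAux_append_singleton_mem_image_iff hΦ hu j

namespace AEquiv

lemma kA_nil_eq (h : AEquiv θ θ') : kA θ' [] = kA θ [] :=
  let ⟨_, hΦ, him⟩ := h
  kA_relabelAux hΦ him θ.2.1

lemma refl (θ : ATree) : AEquiv θ θ :=
  ⟨fun _ j => j, fun _ _ => Set.bijOn_id _, by
    rw [show relabelAux (fun _ j => j) [] = id from funext (relabelAux_id []), Finset.image_id]⟩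

lemma trans {θ'' : ATree} (h : AEquiv θ θ') (h' : AEquiv θ' θ'') : AEquiv θ θ'' := by
  obtain ⟨Φ, hΦ, him⟩ := h
  obtain ⟨Ψ, hΨ, him'⟩ := h'
  refine ⟨fun v j => Ψ (relabelAux Φ [] v) (Φ v j), fun u hu => ?_, ?_⟩
  · have hu' : relabelAux Φ [] u ∈ θ'.1 := him ▸ Finset.mem_image_of_mem _ hu
    have := hΨ _ hu'
    rw [kA_relabelAux hΦ him hu] at this
    exact this.comp (hΦ u hu)
  · rw [him', him, Finset.image_image]
    exact Finset.image_congr fun u _ => relabelAux_relabelAux Φ Ψ [] u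

lemma symm (h : AEquiv θ θ') : AEquiv θ' θ := by
  obtain ⟨Φ, hΦ, him⟩ := h
  set R := relabelAux Φ []
  have hR : Set.InjOn R θ.1 := injOn_relabelAux θ fun w hw => (hΦ w hw).injOn
  set S := Function.invFunOn R θ.1
  let Ψ : List ℕ → ℕ → ℕ := fun v => Function.invFunOn (Φ (S v)) (Set.Icc 1 (kA θ (S v)))
  have hΨ : ∀ u ∈ θ.1, Ψ (R u) = Function.invFunOn (Φ u) (Set.Icc 1 (kA θ u)) :=
    fun u hu => by simp only [Ψ, S, hR.leftInvOn_invFunOn hu]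
  have hleft : ∀ u ∈ θ.1, relabelAux Ψ [] (R u) = u := by
    intro u hu
    have hcomp := relabelAux_relabelAux Φ Ψ [] u
    rw [relabelAux_nil] at hcomp
    rw [hcomp, relabelAux_congr θ (Φ' := fun _ j => j) ?_ (by simpa using hu), relabelAux_id]
    intro w j hwj
    have hw : w ∈ θ.1 := mem_of_prefix θ hwj (List.prefix_append _ _)
    rw [hΨ w hw]
    exact (hΦ w hw).invOn_invFunOn.1 ((mem_append_singleton_iff θ hw j).1 hwj)
  refine ⟨Ψ, fun v hv => ?_, ?_⟩
  · rw [him] at hv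
    obtain ⟨u, hu, rfl⟩ := Finset.mem_image.1 hv
    rw [kA_relabelAux hΦ him hu, hΨ u hu]
    exact (hΦ u hu).invOn_invFunOn.symm.bijOn (hΦ u hu).surjOn.mapsTo_invFunOn (hΦ u hu).mapsTo
  · rw [him, Finset.image_image, Finset.image_congr (f := relabelAux Ψ [] ∘ R) (g := id) hleft,
      Finset.image_id]

end AEquiv

lemma aequiv_equivalence : Equivalence AEquiv :=
  ⟨AEquiv.refl, AEquiv.symm, AEquiv.trans⟩

lemma projA_eq_projA_iff : projA θ = projA θ' ↔ AEquiv θ θ' :=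
  aequiv_equivalence.quot_mk_eq_iff θ θ'

end Equivalence

section Shift

lemma exists_perm_of_bijOn_Icc {k : ℕ} {φ : ℕ → ℕ} (h : Set.BijOn φ (Set.Icc 1 k) (Set.Icc 1 k)) :
    ∃ π : Equiv.Perm (Fin k), ∀ i : Fin k, φ (i.1 + 1) = (π i).1 + 1 := by
  have hφ : ∀ i : Fin k, 1 ≤ φ (i.1 + 1) ∧ φ (i.1 + 1) ≤ k := fun i =>
    h.mapsTo (Set.mem_Icc.2 ⟨by omega, i.2⟩)
  let f : Fin k → Fin k := fun i => ⟨φ (i.1 + 1) - 1, by have := hφ i; omega⟩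
  have hf : Function.Injective f := fun i i' hii' => by
    have hφii' : φ (i.1 + 1) = φ (i'.1 + 1) := by
      have hval : φ (i.1 + 1) - 1 = φ (i'.1 + 1) - 1 := congrArg Fin.val hii'
      have := hφ i
      have := hφ i'
      omega
    have := h.injOn (Set.mem_Icc.2 ⟨by omega, i.2⟩) (Set.mem_Icc.2 ⟨by omega, i'.2⟩) hφii'
    exact Fin.ext (by omega)
  refine ⟨Equiv.ofBijective f (Finite.injective_iff_bijective.1 hf), fun i => ?_⟩
  have := hφ i
  simp only [Equiv.ofBijective_apply, f]
  omega

variable {θ θ' : ATree}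

lemma aequiv_shiftA_of_relabel {Φ : List ℕ → ℕ → ℕ} (hΦ : IsChildBij θ Φ)
    (him : θ'.1 = θ.1.image (relabelAux Φ [])) {j : ℕ} (hj : [j] ∈ θ.1) :
    AEquiv (shiftA θ [j]) (shiftA θ' [Φ [] j]) := by
  have hj' : [Φ [] j] ∈ θ'.1 := him ▸ Finset.mem_image.2 ⟨[j], hj, by simp⟩
  refine ⟨fun w => Φ (j :: w), fun w hw => ?_, Finset.ext fun v => ?_⟩
  · have hw' : [j] ++ w ∈ θ.1 := (mem_shiftA θ hj w).1 hw
    rw [kA_shiftA θ hw']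
    exact hΦ _ hw'
  rw [mem_shiftA θ' hj', him, Finset.mem_image, Finset.mem_image]
  constructor
  · rintro ⟨_ | ⟨b, u⟩, hu, hrel⟩
    · simp at hrel
    rw [relabelAux_cons_nil, List.singleton_append, List.cons.injEq] at hrel
    have hb := (singleton_mem_iff θ b).1 (mem_of_prefix θ hu ⟨u, rfl⟩)
    obtain rfl : b = j := (hΦ [] θ.2.1).injOn hb ((singleton_mem_iff θ j).1 hj) hrel.1
    exact ⟨u, (mem_shiftA θ hj u).2 hu, hrel.2⟩
  · rintro ⟨u, hu, rfl⟩
    exact ⟨j :: u, (mem_shiftA θ hj u).1 hu, by rw [relabelAux_cons_nil]; rfl⟩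

lemma AEquiv.exists_perm_projA_shiftA (h : AEquiv θ θ') {k : ℕ} (hk : kA θ [] = k) :
    ∃ σ : Equiv.Perm (Fin k), ∀ i : Fin k,
      projA (shiftA θ' [i.1 + 1]) = projA (shiftA θ [(σ i).1 + 1]) := by
  obtain ⟨Φ, hΦ, him⟩ := h
  have hroot := hΦ [] θ.2.1
  rw [hk] at hroot
  obtain ⟨π, hπ⟩ := exists_perm_of_bijOn_Icc hroot
  refine ⟨π.symm, fun i => ?_⟩
  have hmem : [(π.symm i).1 + 1] ∈ θ.1 :=
    (singleton_mem_iff θ _).2 ⟨by omega, hk ▸ (π.symm i).2⟩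
  have := aequiv_shiftA_of_relabel hΦ him hmem
  rw [hπ, Equiv.apply_symm_apply] at this
  exact (projA_eq_projA_iff.2 this).symm

end Shift

section Graft

variable {k : ℕ}

lemma cons_mem_graft_iff {f : Fin k → Finset (List ℕ)} {b : ℕ} {w : List ℕ} :
    b :: w ∈ graft k f ↔ ∃ i : Fin k, i.1 + 1 = b ∧ w ∈ f i := by
  simp [graft, and_comm]

lemma succ_cons_mem_graft_iff {f : Fin k → Finset (List ℕ)} (i : Fin k) {w : List ℕ} :
    (i.1 + 1) :: w ∈ graft k f ↔ w ∈ f i := by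
  rw [cons_mem_graft_iff]
  constructor
  · rintro ⟨i', hi', hw⟩
    rwa [Fin.ext (Nat.succ_injective hi')] at hw
  · exact fun hw => ⟨i, rfl, hw⟩

lemma singleton_mem_graft_iff (g : Fin k → ATree) {j : ℕ} :
    [j] ∈ graft k (fun i => (g i).1) ↔ 1 ≤ j ∧ j ≤ k := by
  rw [cons_mem_graft_iff]
  constructor
  · rintro ⟨i, rfl, -⟩
    omega
  · intro hj
    obtain ⟨i, rfl⟩ := exists_fin_val_add_one_eq hj
    exact ⟨i, rfl, (g i).2.1⟩

lemma isOTree_graft (g : Fin k → ATree) : IsOTree (graft k fun i => (g i).1) := by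
  refine ⟨by simp [graft], fun v hv hne => ?_, fun v hv => ?_⟩
  · obtain _ | ⟨b, w⟩ := v
    · exact absurd rfl hne
    obtain ⟨i, rfl, hw⟩ := cons_mem_graft_iff.1 hv
    rcases eq_or_ne w [] with rfl | hw'
    · simp [graft]
    · rw [List.dropLast_cons_of_ne_nil hw', succ_cons_mem_graft_iff]
      exact (g i).2.2.1 w hw hw'
  · obtain _ | ⟨b, w⟩ := v
    · exact ⟨k, fun j => singleton_mem_graft_iff g⟩
    obtain ⟨i, rfl, hw⟩ := cons_mem_graft_iff.1 hv
    obtain ⟨m, hm⟩ := (g i).2.2.2 w hw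
    exact ⟨m, fun j => by rw [List.cons_append, succ_cons_mem_graft_iff, hm]⟩

def graftA (k : ℕ) (g : Fin k → ATree) : ATree :=
  ⟨graft k fun i => (g i).1, isOTree_graft g⟩

lemma kA_graftA_nil (g : Fin k → ATree) : kA (graftA k g) [] = k :=
  kA_eq_of_forall_mem_iff _ fun _ => singleton_mem_graft_iff g

lemma shiftA_graftA (g : Fin k → ATree) (i : Fin k) : shiftA (graftA k g) [i.1 + 1] = g i := by
  have hi : [i.1 + 1] ∈ (graftA k g).1 := (succ_cons_mem_graft_iff i).2 (g i).2.1
  exact Subtype.ext <| Finset.ext fun v => by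
    rw [mem_shiftA _ hi, List.singleton_append]
    exact succ_cons_mem_graft_iff i

lemma graftA_shiftA {θ : ATree} (hθ : kA θ [] = k) :
    graftA k (fun i => shiftA θ [i.1 + 1]) = θ := by
  refine Subtype.ext <| Finset.ext fun v => ?_
  obtain _ | ⟨b, w⟩ := v
  · simpa [graftA, graft] using θ.2.1
  change b :: w ∈ graft k _ ↔ _
  rw [cons_mem_graft_iff]
  constructor
  · rintro ⟨i, rfl, hw⟩
    exact (mem_shiftA θ ((singleton_mem_iff θ _).2 ⟨by omega, hθ ▸ i.2⟩) w).1 hw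
  · intro hw
    have hb := (singleton_mem_iff θ b).1 (mem_of_prefix θ hw ⟨w, rfl⟩)
    obtain ⟨i, rfl⟩ := exists_fin_val_add_one_eq (hθ ▸ hb)
    exact ⟨i, rfl, (mem_shiftA θ (mem_of_prefix θ hw ⟨w, rfl⟩) w).2 hw⟩

end Graft

section GraftEquiv

variable {k : ℕ}

def graftRelabel (k : ℕ) (Ψ : Fin k → List ℕ → ℕ → ℕ) : List ℕ → ℕ → ℕ
  | [], j => j
  | b :: w, j => if h : b - 1 < k then Ψ ⟨b - 1, h⟩ w j else j

lemma graftRelabel_succ_cons (Ψ : Fin k → List ℕ → ℕ → ℕ) (i : Fin k) (w : List ℕ) :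
    graftRelabel k Ψ ((i.1 + 1) :: w) = Ψ i w := by
  funext j
  simp [graftRelabel]

lemma relabelAux_graftRelabel_succ_cons (Ψ : Fin k → List ℕ → ℕ → ℕ) (i : Fin k) (w : List ℕ) :
    relabelAux (graftRelabel k Ψ) [] ((i.1 + 1) :: w) = (i.1 + 1) :: relabelAux (Ψ i) [] w := by
  rw [relabelAux_cons_nil]
  simp only [graftRelabel_succ_cons]
  rfl

lemma aequiv_graftA {f g : Fin k → ATree} (h : ∀ i, AEquiv (f i) (g i)) :
    AEquiv (graftA k f) (graftA k g) := by
  choose Ψ hΨ him using h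
  refine ⟨graftRelabel k Ψ, fun u hu => ?_, ?_⟩
  · obtain _ | ⟨b, w⟩ := u
    · rw [kA_graftA_nil]
      exact Set.bijOn_id _
    obtain ⟨i, rfl, hw⟩ := cons_mem_graft_iff.1 hu
    have hkA := kA_shiftA (graftA k f) (u := [i.1 + 1]) hu
    rw [shiftA_graftA, List.singleton_append] at hkA
    rw [← hkA, graftRelabel_succ_cons]
    exact hΨ i w hw
  · change graft k _ = (graft k _).image _
    simp only [graft, Finset.image_union, Finset.image_singleton, Finset.biUnion_image,
      Finset.image_image, relabelAux_nil, him]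
    exact congrArg _ (Finset.biUnion_congr rfl fun i _ => Finset.image_congr fun w _ =>
      (relabelAux_graftRelabel_succ_cons Ψ i w).symm)

def rootRelabel (π : Equiv.Perm (Fin k)) : List ℕ → ℕ → ℕ
  | [], j => if h : 1 ≤ j ∧ j ≤ k then (π ⟨j - 1, by omega⟩).1 + 1 else j
  | _ :: _, j => j

lemma rootRelabel_nil_succ (π : Equiv.Perm (Fin k)) (i : Fin k) :
    rootRelabel π [] (i.1 + 1) = (π i).1 + 1 := by
  simp [rootRelabel]

lemma bijOn_rootRelabel_nil (π : Equiv.Perm (Fin k)) :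
    Set.BijOn (rootRelabel π []) (Set.Icc 1 k) (Set.Icc 1 k) := by
  have hmaps : ∀ π : Equiv.Perm (Fin k),
      Set.MapsTo (rootRelabel π []) (Set.Icc 1 k) (Set.Icc 1 k) := by
    intro π j hj
    obtain ⟨i, rfl⟩ := exists_fin_val_add_one_eq hj
    rw [rootRelabel_nil_succ]
    exact ⟨by omega, (π i).2⟩
  have hinv : ∀ π : Equiv.Perm (Fin k),
      Set.LeftInvOn (rootRelabel π.symm []) (rootRelabel π []) (Set.Icc 1 k) := by
    intro π j hj
    obtain ⟨i, rfl⟩ := exists_fin_val_add_one_eq hj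
    simp [rootRelabel_nil_succ]
  exact Set.InvOn.bijOn ⟨hinv π, by simpa using hinv π.symm⟩ (hmaps π) (hmaps π.symm)

lemma aequiv_graftA_comp (f : Fin k → ATree) (π : Equiv.Perm (Fin k)) :
    AEquiv (graftA k (f ∘ π)) (graftA k f) := by
  refine ⟨rootRelabel π, fun u _ => ?_, ?_⟩
  · obtain _ | ⟨b, w⟩ := u
    · rw [kA_graftA_nil]
      exact bijOn_rootRelabel_nil π
    · exact Set.bijOn_id _
  · have hR : ∀ (i : Fin k) w,
        relabelAux (rootRelabel π) [] ((i.1 + 1) :: w) = ((π i).1 + 1) :: w := fun i w => by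
      rw [relabelAux_cons_nil, rootRelabel_nil_succ]
      exact congrArg _ (relabelAux_id [] w)
    change graft k _ = (graft k _).image _
    simp only [graft, Finset.image_union, Finset.image_singleton, Finset.biUnion_image,
      Finset.image_image, relabelAux_nil, Function.comp_def, hR]
    congr 1
    ext v
    simp only [Finset.mem_biUnion, Finset.mem_univ, true_and]
    exact π.surjective.exists

lemma projA_graftA_eq {θ : ATree} (hθ : kA θ [] = k) {g : Fin k → ATree}
    {σ : Equiv.Perm (Fin k)} (h : ∀ i, projA (g i) = projA (shiftA θ [(σ i).1 + 1])) :
    projA (graftA k g) = projA θ :=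
  calc projA (graftA k g) = projA (graftA k ((fun i => shiftA θ [i.1 + 1]) ∘ σ)) :=
        projA_eq_projA_iff.2 (aequiv_graftA fun i => projA_eq_projA_iff.1 (h i))
    _ = projA (graftA k fun i => shiftA θ [i.1 + 1]) :=
        projA_eq_projA_iff.2 (aequiv_graftA_comp _ σ)
    _ = projA θ := by rw [graftA_shiftA hθ]

end GraftEquiv

lemma finite_fiber (θ : ATree) : (fiber (projA θ)).Finite := by
  set M := θ.1.sup (kA θ)
  let relabelOf : (θ.1 → Fin (M + 1) → Fin (M + 1)) → List ℕ → ℕ → ℕ := fun d w j =>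
    if h : w ∈ θ.1 ∧ j ≤ M then d ⟨w, h.1⟩ ⟨j, Nat.lt_succ_of_le h.2⟩ else j
  refine ((Set.finite_range fun d => θ.1.image (relabelAux (relabelOf d) [])).preimage
    Subtype.val_injective.injOn).subset fun θ' hθ' => ?_
  obtain ⟨Φ, hΦ, him⟩ := (projA_eq_projA_iff.1 hθ').symm
  -- Only the values of `Φ` at the children of vertices of `θ` matter, and they are at most `M`.
  refine ⟨fun w j => ⟨min (Φ w j) M, by omega⟩, ?_⟩
  rw [him]
  refine Finset.image_congr fun u hu => relabelAux_congr θ (fun w j hwj => ?_) (by simpa using hu)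
  have hw : w ∈ θ.1 := mem_of_prefix θ hwj (List.prefix_append _ _)
  have hj := (mem_append_singleton_iff θ hw j).1 hwj
  have hkM : kA θ w ≤ M := Finset.le_sup hw
  have hΦj := (hΦ w hw).mapsTo (Set.mem_Icc.2 hj)
  simp only [relabelOf, dif_pos (And.intro hw (hj.2.trans hkM))]
  simp only [Set.mem_Icc] at hΦj
  omega

def fiberEquivPermFiber {θ : ATree} {k : ℕ} (hθ : kA θ [] = k) :
    fiber (projA θ) ≃ permFiber projA (fun i : Fin k => projA (shiftA θ [i.1 + 1])) where
  toFun θ' := ⟨fun i => shiftA θ'.1 [i.1 + 1],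
    (projA_eq_projA_iff.1 θ'.2).symm.exists_perm_projA_shiftA hθ⟩
  invFun g := ⟨graftA k g.1, let ⟨_, hσ⟩ := g.2; projA_graftA_eq hθ hσ⟩
  left_inv θ' := Subtype.ext <|
    graftA_shiftA ((projA_eq_projA_iff.1 θ'.2).symm.kA_nil_eq.trans hθ)
  right_inv g := Subtype.ext (funext (shiftA_graftA g.1))

theorem fiber_average_symmetric_general
    (k : ℕ) (θ : ATree) (hθ : kA θ [] = k)
    (F : (Fin k → ATree) → ℝ≥0∞)
    (hFs : ∀ (g : Fin k → ATree) (π : Equiv.Perm (Fin k)), F (g ∘ π) = F g) :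
    ((fiber (projA θ)).ncard : ℝ≥0∞)⁻¹ *
        ∑' θ' : fiber (projA θ), F (fun i => shiftA θ'.1 [i.1 + 1]) =
      (∏ i : Fin k, ((fiber (projA (shiftA θ [i.1 + 1]))).ncard : ℝ≥0∞)⁻¹) *
        ∑' g : (∀ i : Fin k, fiber (projA (shiftA θ [i.1 + 1]))),
          F (fun i => (g i).1) := by
  let ξ : Fin k → AQ := fun i => projA (shiftA θ [i.1 + 1])
  let e : fiber (projA θ) ≃ permFiber projA ξ := fiberEquivPermFiber hθ
  have hcard : (fiber (projA θ)).ncard = (permFiber projA ξ).ncard := by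
    rw [← Nat.card_coe_set_eq, Nat.card_congr e, Nat.card_coe_set_eq]
  calc _ = ((permFiber projA ξ).ncard : ℝ≥0∞)⁻¹ * ∑' g : permFiber projA ξ, F g := by
        rw [hcard]
        exact congrArg _ (e.tsum_eq fun g => F g.1)
    _ = _ := inv_ncard_mul_tsum_permFiber projA ξ (fun _ => finite_fiber _) F hFs

/-- **The combinatorial identity (2.2).** Let `ξ ∈ 𝔸` with `k_∅(ξ) = k > 0`, let `θ`
be any representative of `ξ`, and let `ξ¹,…,ξ^k` be the classes of the shifted trees
`τ_1θ,…,τ_kθ`. Then for every symmetric measurable `F : 𝒜^k → ℝ₊`, the average of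
`F(τ_1θ',…,τ_kθ')` over the fiber `𝔭⁻¹(ξ)` equals the average of `F(θ_1,…,θ_k)` over
`𝔭⁻¹(ξ¹) × ⋯ × 𝔭⁻¹(ξ^k)`. -/
theorem fiber_average_symmetric
    (k : ℕ) (hk : 0 < k) (θ : ATree) (hθ : kA θ [] = k)
    (F : (Fin k → ATree) → ℝ≥0∞) (hFm : Measurable F)
    (hFs : ∀ (g : Fin k → ATree) (π : Equiv.Perm (Fin k)), F (g ∘ π) = F g) :
    ((fiber (projA θ)).ncard : ℝ≥0∞)⁻¹ *
        ∑' θ' : fiber (projA θ), F (fun i => shiftA θ'.1 [i.1 + 1]) =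
      (∏ i : Fin k, ((fiber (projA (shiftA θ [i.1 + 1]))).ncard : ℝ≥0∞)⁻¹) *
        ∑' g : (∀ i : Fin k, fiber (projA (shiftA θ [i.1 + 1]))),
          F (fun i => (g i).1) :=
  fiber_average_symmetric_general k θ hθ F hFs
end
end

section
/- Let Θ be an infinite measure on 𝕋 with Θ(H(𝒯)=0)=0 and 0<Θ(H(𝒯)>t)<∞ for every t>0, satisfying the regenerative property (R), and set v(t)=Θ(H(𝒯)>t). Then for every t>0 and h>0, ∫ Z(t,t+h)(𝒯) Θ(d𝒯) ≤ v(h). -/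
open MeasureTheory Metric Set
open scoped ENNReal NNReal Topology Classical

noncomputable section

/-!
The height is not known to be measurable for the Gromov–Hausdorff σ-field, so it is replaced
by the radius `ghRadius x = d_GH(x, point) = diam x / 2`, which is measurable, lies between
`H / 2` and `H`, and does not increase when passing to a subtree. Fix `b > h` and let
`q = Θ(ghRadius ≥ b | H > h) > 0`. Testing (R) against the symmetric event "some subtree above
level `t` has radius `≥ b`", which forces the whole tree to have radius `≥ b`, gives
`∑ₚ Θ(Z = p | H > t) (1 - (1 - q)ᵖ) ≤ Θ(ghRadius ≥ b) / v(t) = q v(h) / v(t)`.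
As `1 - (1 - q)ᵖ ≥ p q (1 - q)ᵖ`, dividing by `q` and letting `b → ∞` (so `q → 0`) gives
`∫ Z dΘ / v(t) ≤ v(h) / v(t)`.
-/

open Filter ProbabilityTheory

def ptPCMS : PCMS where
  carrier := PUnit
  met := inferInstance
  cpt := inferInstance
  root := PUnit.unit

def ptMT : MT := ptPCMS.toMT

lemma subsingleton_ptMT_out : Subsingleton ptMT.out.carrier := by
  obtain ⟨e, -⟩ := Quotient.exact (Quotient.out_eq ptMT)
  exact e.toEquiv.subsingleton_congr.mpr (inferInstanceAs (Subsingleton PUnit))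

section PointDistance

variable {X Y : PCMS} [Subsingleton Y.carrier]

/-- Glue the point `Y` to `X` at distance `diam X / 2 + ε` from every point of `X`. -/
lemma exists_isometry_glue_point {ε : ℝ} (hε : 0 < ε) :
    ∃ (E : Type) (_ : MetricSpace E) (f : X.carrier → E) (g : Y.carrier → E),
      Isometry f ∧ Isometry g ∧ max (hausdorffDist (range f) (range g))
        (dist (f X.root) (g Y.root)) ≤ diam (univ : Set X.carrier) / 2 + ε := by
  set K := diam (univ : Set X.carrier) / 2 + ε with hK_def
  have hK : 0 < K := by positivity
  have hglue : ∀ p q : X.carrier,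
      |dist (id p) (id q) - dist ((fun _ => Y.root) p) ((fun _ => Y.root) q)| ≤ 2 * K := by
    intro p q
    simp only [id, dist_self, sub_zero, abs_dist]
    have := dist_le_diam_of_mem isCompact_univ.isBounded (mem_univ p) (mem_univ q)
    linarith [hK_def]
  let _ := glueMetricApprox id (fun _ : X.carrier => Y.root) K hK hglue
  have hcross : ∀ (a : X.carrier) (b : Y.carrier),
      dist (Sum.inl a : X.carrier ⊕ Y.carrier) (Sum.inr b) = K := by
    intro a b
    rw [Subsingleton.elim b Y.root]
    exact glueDist_glued_points id (fun _ : X.carrier => Y.root) K a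
  refine ⟨X.carrier ⊕ Y.carrier, inferInstance, Sum.inl, Sum.inr,
    Isometry.of_dist_eq fun _ _ => rfl, Isometry.of_dist_eq fun _ _ => rfl,
    max_le (hausdorffDist_le_of_mem_dist hK.le ?_ ?_) (hcross _ _).le⟩
  · rintro _ ⟨a, rfl⟩
    exact ⟨_, mem_range_self Y.root, (hcross a _).le⟩
  · rintro _ ⟨b, rfl⟩
    exact ⟨_, mem_range_self X.root, (dist_comm _ _).trans_le (hcross _ b).le⟩

/-- In a common embedding, `X` lies in the ball of radius `r` around the image of the
point `Y`. -/
lemma half_diam_le_of_isometry {E : Type} [MetricSpace E] {f : X.carrier → E}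
    {g : Y.carrier → E} (hf : Isometry f) (hg : Isometry g) {r : ℝ}
    (hr : max (hausdorffDist (range f) (range g)) (dist (f X.root) (g Y.root)) ≤ r) :
    diam (univ : Set X.carrier) / 2 ≤ r := by
  have hrange : range g = {g Y.root} :=
    range_eq_singleton_iff.mpr fun b => by rw [Subsingleton.elim b Y.root]
  have hne : hausdorffEDist (range f) (range g) ≠ ⊤ :=
    hausdorffEDist_ne_top_of_nonempty_of_bounded (range_nonempty f) (range_nonempty g)
      (isCompact_range hf.continuous).isBounded (isCompact_range hg.continuous).isBounded
  have hball : ∀ a, dist (f a) (g Y.root) ≤ r := by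
    intro a
    have := (infDist_le_hausdorffDist_of_mem (mem_range_self a) hne).trans
      ((le_max_left _ _).trans hr)
    rwa [hrange, infDist_singleton] at this
  have hr0 : 0 ≤ r := dist_nonneg.trans (hball X.root)
  suffices diam (univ : Set X.carrier) ≤ 2 * r by linarith
  refine diam_le_of_forall_dist_le (by positivity) fun a _ b _ => ?_
  rw [← hf.dist_eq]
  linarith [dist_triangle_right (f a) (f b) (g Y.root), hball a, hball b]

lemma pghDist_eq_half_diam : pghDist X Y = diam (univ : Set X.carrier) / 2 := by
  refine le_antisymm (le_of_forall_pos_le_add fun ε hε => csInf_le ?_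
    (exists_isometry_glue_point hε)) (le_csInf ⟨_, exists_isometry_glue_point one_pos⟩ ?_)
  · exact ⟨0, fun r ⟨_, _, _, _, _, _, hr⟩ => dist_nonneg.trans ((le_max_right _ _).trans hr)⟩
  · rintro r ⟨E, _, f, g, hf, hg, hr⟩
    exact half_diam_le_of_isometry hf hg hr

end PointDistance

def ghRadius (x : MT) : ℝ := mGH x ptMT

lemma ghRadius_eq_half_diam (x : MT) : ghRadius x = diam (univ : Set x.out.carrier) / 2 :=
  have := subsingleton_ptMT_out
  pghDist_eq_half_diam

lemma ghRadius_toMT (X : PCMS) : ghRadius X.toMT = diam (univ : Set X.carrier) / 2 := by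
  obtain ⟨e, -⟩ := Quotient.exact (Quotient.out_eq X.toMT)
  rw [ghRadius_eq_half_diam, ← e.isometry.diam_image, image_univ, e.surjective.range_eq]

lemma measurableSet_ghRadius_ge (b : ℝ) : MeasurableSet (ghRadius ⁻¹' Ici b) := by
  have : ghRadius ⁻¹' Ici b = {x | mGH x ptMT < b}ᶜ := by
    ext x
    simp [ghRadius]
  rw [this]
  refine (MeasurableSpace.measurableSet_generateFrom ?_).compl
  exact ⟨ptMT, b, rfl⟩

lemma diam_univ_subtype {α : Type*} [PseudoMetricSpace α] (S : Set α) :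
    diam (univ : Set S) = diam S := by
  rw [← isometry_subtype_coe.diam_image, image_univ, Subtype.range_coe]

namespace PCMS

variable (X : PCMS)

lemma dist_root_le_height (σ : X.carrier) : dist X.root σ ≤ X.height := by
  refine le_ciSup ⟨diam (univ : Set X.carrier), ?_⟩ σ
  rintro _ ⟨τ, rfl⟩
  exact dist_le_diam_of_mem isCompact_univ.isBounded (mem_univ _) (mem_univ _)

lemma height_le_diam : X.height ≤ diam (univ : Set X.carrier) :=
  ciSup_le fun _ => dist_le_diam_of_mem isCompact_univ.isBounded (mem_univ _) (mem_univ _)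

lemma diam_le_two_mul_height : diam (univ : Set X.carrier) ≤ 2 * X.height := by
  have h0 : 0 ≤ X.height := by simpa using X.dist_root_le_height X.root
  refine diam_le_of_forall_dist_le (by positivity) fun a _ b _ => ?_
  linarith [dist_triangle_left a b X.root, X.dist_root_le_height a, X.dist_root_le_height b]

end PCMS

lemma heightT_le_two_mul_ghRadius (T : TT) : heightT T ≤ 2 * ghRadius T.1 := by
  rw [ghRadius_eq_half_diam, heightT]
  linarith [T.1.out.height_le_diam]

lemma ghRadius_le_heightT (T : TT) : ghRadius T.1 ≤ heightT T := by
  rw [ghRadius_eq_half_diam, heightT]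
  linarith [T.1.out.diam_le_two_mul_height]

section Subtrees

variable {t : ℝ} (h : ℝ) (T : TT)

lemma ZT_eq_ncard (ht : t ≠ 0) : ZT T t h = (bigComps T.1.out t h).ncard :=
  if_neg ht

lemma lt_heightT_of_ZT_ne_zero (ht : t ≠ 0) (hZ : ZT T t h ≠ 0) : t < heightT T := by
  rw [ZT_eq_ncard h T ht] at hZ
  obtain ⟨_, ⟨σ, hσ, -⟩, -⟩ := nonempty_of_ncard_ne_zero hZ
  exact hσ.trans_le (T.1.out.dist_root_le_height σ)

lemma ghRadius_subPCMS_le (X : PCMS) (C : Set X.carrier) :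
    ghRadius (subPCMS X t C).toMT ≤ ghRadius X.toMT := by
  rw [ghRadius_toMT, ghRadius_toMT]
  erw [diam_univ_subtype (closure C ∪ {anchor X t C} : Set X.carrier)]
  have := diam_mono (subset_univ (closure C ∪ {anchor X t C})) isCompact_univ.isBounded
  linarith

lemma ghRadius_subtreesVecT_le (p : ℕ) (i : Fin p) :
    ghRadius (subtreesVecT T t h p i) ≤ ghRadius T.1 := by
  conv_rhs => rw [← Quotient.out_eq T.1]
  exact ghRadius_subPCMS_le _ _

/-- With the wrong count `p`, `enumSet` returns empty sets, whose subtrees are points. -/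
lemma ghRadius_subtreesVecT_of_ne (ht : t ≠ 0) {p : ℕ} (hp : p ≠ ZT T t h) (i : Fin p) :
    ghRadius (subtreesVecT T t h p i) = 0 := by
  have hno : ¬ Nonempty (Fin p ≃ bigComps T.1.out t h) := by
    rintro ⟨e⟩
    apply hp
    rw [ZT_eq_ncard h T ht, ← Nat.card_coe_set_eq, ← Nat.card_congr e, Nat.card_fin]
  simp only [subtreesVecT, subtreesVec, enumSet, dif_neg hno, ghRadius_toMT]
  erw [diam_univ_subtype (closure ∅ ∪ {anchor T.1.out t ∅} : Set T.1.out.carrier)]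
  rw [closure_empty, empty_union, diam_singleton, zero_div]

end Subtrees

section Lebesgue

variable {α : Type*} [MeasurableSpace α] (μ : Measure α)

lemma sum_lintegral_le_lintegral_sum {ι : Type*} (s : Finset ι) (f : ι → α → ℝ≥0∞) :
    ∑ i ∈ s, ∫⁻ x, f i x ∂μ ≤ ∫⁻ x, ∑ i ∈ s, f i x ∂μ := by
  classical
  induction s using Finset.induction_on with
  | empty => simp
  | insert j s hj ih =>
    simp only [Finset.sum_insert hj]
    exact (add_le_add le_rfl ih).trans (le_lintegral_add _ _)

/-- The level sets of `f` need not be measurable: they are replaced by measurable hulls. -/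
lemma lintegral_natCast_le_tsum (f : α → ℕ) :
    ∫⁻ x, (f x : ℝ≥0∞) ∂μ ≤ ∑' n : ℕ, n * μ {x | f x = n} := by
  set S := fun n : ℕ => toMeasurable μ {x | f x = n}
  calc ∫⁻ x, (f x : ℝ≥0∞) ∂μ ≤ ∫⁻ x, ∑' n : ℕ, (S n).indicator (fun _ => (n : ℝ≥0∞)) x ∂μ :=
        lintegral_mono fun x => by
          rw [← indicator_of_mem (subset_toMeasurable μ _ rfl : x ∈ S (f x))
            (fun _ => (f x : ℝ≥0∞))]
          exact ENNReal.le_tsum (f x)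
    _ = ∑' n : ℕ, n * μ {x | f x = n} := by
        rw [lintegral_tsum fun n => (measurable_const.indicator
          (measurableSet_toMeasurable _ _)).aemeasurable]
        simp only [lintegral_indicator_const (measurableSet_toMeasurable _ _),
          measure_toMeasurable]

lemma condOn_apply_le (s t : Set α) : condOn μ s t ≤ (μ s)⁻¹ * μ t :=
  mul_le_mul_right (Measure.restrict_le_self t) _

lemma condOn_apply_of_subset {s t : Set α} (hts : t ⊆ s) : condOn μ s t = (μ s)⁻¹ * μ t := by
  rw [condOn, Measure.smul_apply, Measure.restrict_eq_self μ hts, smul_eq_mul]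

end Lebesgue

lemma measurableSet_exists_mem {α ι : Type*} [MeasurableSpace α] [Countable ι] {U : Set α}
    (hU : MeasurableSet U) : MeasurableSet {v : ι → α | ∃ i, v i ∈ U} := by
  simp only [ofPred_exists]
  exact MeasurableSet.iUnion fun i => measurable_pi_apply i hU

lemma iidMeasure_exists_mem_ge {α : Type*} [MeasurableSpace α] (ν : Measure α)
    [IsProbabilityMeasure ν] {U : Set α} (hU : MeasurableSet U) (p : ℕ) :
    p * ν U * ν Uᶜ ^ p ≤ iidMeasure p ν {v | ∃ i, v i ∈ U} := by
  have hcompl : {v : Fin p → α | ∃ i, v i ∈ U}ᶜ = univ.pi fun _ => Uᶜ := by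
    ext v
    simp
  -- `1 - r ^ p = q * ∑ i < p, r ^ (p - 1 - i)` when `q + r = 1`
  have hgeom := geom_sum₂_mul_add (ν U) (ν Uᶜ) p
  rw [measure_add_measure_compl hU, measure_univ, one_pow] at hgeom
  have hexists : iidMeasure p ν {v | ∃ i, v i ∈ U} + ν Uᶜ ^ p = 1 := by
    have := measure_add_measure_compl (μ := iidMeasure p ν) (measurableSet_exists_mem hU)
    rwa [hcompl, iidMeasure, Measure.pi_pi, measure_univ, Finset.prod_const, Finset.card_univ,
      Fintype.card_fin] at this
  have hterm : ∀ i ∈ Finset.range p, ν Uᶜ ^ p ≤ 1 ^ i * ν Uᶜ ^ (p - 1 - i) := fun i _ => by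
    rw [one_pow, one_mul]
    exact pow_le_pow_of_le_one zero_le prob_le_one (by omega)
  calc (p : ℝ≥0∞) * ν U * ν Uᶜ ^ p = (∑ _i ∈ Finset.range p, ν Uᶜ ^ p) * ν U := by
        simp only [Finset.sum_const, Finset.card_range, nsmul_eq_mul]
        ring
    _ ≤ (∑ i ∈ Finset.range p, 1 ^ i * ν Uᶜ ^ (p - 1 - i)) * ν U :=
        mul_le_mul_left (Finset.sum_le_sum hterm) _
    _ = iidMeasure p ν {v | ∃ i, v i ∈ U} :=
        (ENNReal.add_left_inj (ENNReal.pow_ne_top (measure_ne_top _ _))).mp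
          (hgeom.trans hexists.symm)

/-- The law `Θ(· | H > h)`, viewed on `MT`. -/
def condHeightLaw (Θ : Measure TT) (h : ℝ) : Measure MT :=
  (condOn Θ {T | h < heightT T}).map Subtype.val

def hitEvent (b : ℝ) (p : ℕ) : Set (Fin p → MT) := {v | ∃ i, v i ∈ ghRadius ⁻¹' Ici b}

lemma comp_perm_mem_hitEvent {b : ℝ} {p : ℕ} (v : Fin p → MT) (π : Equiv.Perm (Fin p)) :
    v ∘ π ∈ hitEvent b p ↔ v ∈ hitEvent b p :=
  ⟨fun ⟨i, hi⟩ => ⟨π i, hi⟩, fun ⟨i, hi⟩ => ⟨π.symm i, by simpa using hi⟩⟩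

def hitIndicator (b : ℝ) (p : ℕ) : (Fin p → MT) → ℝ≥0∞ := (hitEvent b p).indicator 1

section Regenerative

variable {Θ : Measure TT} {t h b : ℝ}

lemma isProbabilityMeasure_condHeightLaw (h0 : Θ {T | h < heightT T} ≠ 0)
    (hfin : Θ {T | h < heightT T} ≠ ∞) : IsProbabilityMeasure (condHeightLaw Θ h) :=
  have : IsProbabilityMeasure (condOn Θ _) := cond_isProbabilityMeasure_of_finite h0 hfin
  Measure.isProbabilityMeasure_map measurable_subtype_coe.aemeasurable

lemma measure_ghRadius_ge_eq (h0 : Θ {T | h < heightT T} ≠ 0)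
    (hfin : Θ {T | h < heightT T} ≠ ∞) (hb : h < b) :
    Θ (Subtype.val ⁻¹' (ghRadius ⁻¹' Ici b)) =
      Θ {T | h < heightT T} * condHeightLaw Θ h (ghRadius ⁻¹' Ici b) := by
  have hsub : Subtype.val ⁻¹' (ghRadius ⁻¹' Ici b) ⊆ {T : TT | h < heightT T} :=
    fun T hT => hb.trans_le (le_trans hT (ghRadius_le_heightT T))
  rw [condHeightLaw, Measure.map_apply measurable_subtype_coe (measurableSet_ghRadius_ge b),
    condOn_apply_of_subset Θ hsub, ← mul_assoc, ENNReal.mul_inv_cancel h0 hfin, one_mul]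

/-- Off `{ZT = p}` the integrand vanishes, so the integral over this possibly non-measurable
set is the integral over the whole space. -/
lemma lintegral_hitEvent_eq (hreg : Regenerative Θ) (ht : 0 < t) (hh : 0 < h) (hb : 0 < b)
    (p : ℕ) :
    ∫⁻ T, hitIndicator b p (subtreesVecT T t h p) ∂condOn Θ {T | t < heightT T} =
      condOn Θ {T | t < heightT T} {T | ZT T t h = p} *
        iidMeasure p (condHeightLaw Θ h) (hitEvent b p) := by
  have hsupp : (fun T => hitIndicator b p (subtreesVecT T t h p)).support ⊆
      {T | ZT T t h = p} := by
    intro T hT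
    by_contra hp
    obtain ⟨i, hi⟩ := mem_of_indicator_ne_zero (f := 1) hT
    have := ghRadius_subtreesVecT_of_ne h T ht.ne' (Ne.symm hp) i
    exact (hb.trans_le hi).ne' this
  have hE : MeasurableSet (hitEvent b p) := measurableSet_exists_mem (measurableSet_ghRadius_ge b)
  rw [← setLIntegral_eq_of_support_subset hsupp,
    ← lintegral_indicator_one (μ := iidMeasure p (condHeightLaw Θ h)) hE]
  refine hreg t h ht hh p _ (measurable_one.indicator hE) fun v π => ?_
  simp only [hitIndicator, indicator, comp_perm_mem_hitEvent, Pi.one_apply]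

/-- Only the term `p = ZT T t h` survives, and a hit there is a hit of `T` itself. -/
lemma sum_hitIndicator_le (ht : t ≠ 0) (hb : 0 < b) (n : ℕ) (T : TT) :
    ∑ p ∈ Finset.range n, hitIndicator b p (subtreesVecT T t h p) ≤
      (Subtype.val ⁻¹' (ghRadius ⁻¹' Ici b)).indicator (1 : TT → ℝ≥0∞) T := by
  have hzero : ∀ p ∈ insert (ZT T t h) (Finset.range n), p ≠ ZT T t h →
      hitIndicator b p (subtreesVecT T t h p) = 0 := by
    intro p _ hp
    refine indicator_of_notMem ?_ _
    rintro ⟨i, hi⟩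
    have := ghRadius_subtreesVecT_of_ne h T ht hp i
    exact (hb.trans_le hi).ne' this
  calc _ ≤ ∑ p ∈ insert (ZT T t h) (Finset.range n),
        hitIndicator b p (subtreesVecT T t h p) :=
        Finset.sum_le_sum_of_subset (Finset.subset_insert _ _)
    _ = hitIndicator b _ (subtreesVecT T t h (ZT T t h)) :=
        Finset.sum_eq_single_of_mem _ (Finset.mem_insert_self _ _) hzero
    _ ≤ _ := by
        refine indicator_apply_le' (fun ⟨i, hi⟩ => ?_) fun _ => zero_le
        rw [indicator_of_mem (show T ∈ Subtype.val ⁻¹' (ghRadius ⁻¹' Ici b) from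
          le_trans hi (ghRadius_subtreesVecT_le h T _ i)), Pi.one_apply, Pi.one_apply]

lemma natCast_mul_measure_ZT_eq (ht : t ≠ 0) (h0 : Θ {T | t < heightT T} ≠ 0)
    (hfin : Θ {T | t < heightT T} ≠ ∞) (p : ℕ) :
    p * Θ {T | ZT T t h = p} =
      Θ {T | t < heightT T} * (p * condOn Θ {T | t < heightT T} {T | ZT T t h = p}) := by
  rcases eq_or_ne p 0 with rfl | hp
  · simp
  have hsub : {T | ZT T t h = p} ⊆ {T : TT | t < heightT T} := fun T hT =>
    lt_heightT_of_ZT_ne_zero h T ht (hT.trans_ne hp)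
  rw [condOn_apply_of_subset Θ hsub, ← mul_assoc, ← mul_assoc, mul_right_comm _ (p : ℝ≥0∞),
    ENNReal.mul_inv_cancel h0 hfin, one_mul]

lemma sum_mul_condOn_mul_pow_le
    (hv : ∀ t : ℝ, 0 < t → 0 < Θ { T | t < heightT T } ∧ Θ { T | t < heightT T } < ∞)
    (hreg : Regenerative Θ) (ht : 0 < t) (hh : 0 < h) (hb : h < b) (n : ℕ) :
    ∑ p ∈ Finset.range n, p * condOn Θ {T | t < heightT T} {T | ZT T t h = p} *
        condHeightLaw Θ h (ghRadius ⁻¹' Ici b)ᶜ ^ p ≤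
      (Θ {T | t < heightT T})⁻¹ * Θ {T | h < heightT T} := by
  obtain ⟨hAh0, hAhfin⟩ := hv h hh
  have := isProbabilityMeasure_condHeightLaw hAh0.ne' hAhfin.ne
  set ν := condHeightLaw Θ h
  set U := ghRadius ⁻¹' Ici b
  have hU := measurableSet_ghRadius_ge b
  have hq0 : ν U ≠ 0 := by
    intro hq
    have hsub : {T : TT | 2 * b < heightT T} ⊆ Subtype.val ⁻¹' U := fun T hT => by
      have : 2 * b < heightT T := hT
      have := heightT_le_two_mul_ghRadius T
      exact (show b ≤ ghRadius T.1 by linarith)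
    have := (hv (2 * b) (by linarith)).1.trans_le (measure_mono hsub)
    rw [measure_ghRadius_ge_eq hAh0.ne' hAhfin.ne hb, hq, mul_zero] at this
    exact this.false
  refine (ENNReal.mul_le_mul_iff_left hq0 (measure_ne_top ν U)).mp ?_
  calc (∑ p ∈ Finset.range n, p * condOn Θ {T | t < heightT T} {T | ZT T t h = p} *
        ν Uᶜ ^ p) * ν U
      = ∑ p ∈ Finset.range n,
          condOn Θ {T | t < heightT T} {T | ZT T t h = p} * (p * ν U * ν Uᶜ ^ p) := by
        rw [Finset.sum_mul]
        exact Finset.sum_congr rfl fun p _ => by ring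
    _ ≤ ∑ p ∈ Finset.range n,
          condOn Θ {T | t < heightT T} {T | ZT T t h = p} * iidMeasure p ν (hitEvent b p) := by
        gcongr with p
        exact iidMeasure_exists_mem_ge ν hU p
    _ = ∑ p ∈ Finset.range n, ∫⁻ T, hitIndicator b p (subtreesVecT T t h p)
          ∂condOn Θ {T | t < heightT T} :=
        Finset.sum_congr rfl fun p _ => (lintegral_hitEvent_eq hreg ht hh (hh.trans hb) p).symm
    _ ≤ ∫⁻ T, (Subtype.val ⁻¹' U).indicator 1 T ∂condOn Θ {T | t < heightT T} :=
        (sum_lintegral_le_lintegral_sum _ _ _).trans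
          (lintegral_mono (sum_hitIndicator_le ht.ne' (hh.trans hb) n))
    _ ≤ (Θ {T | t < heightT T})⁻¹ * Θ (Subtype.val ⁻¹' U) := by
        rw [lintegral_indicator_one (measurable_subtype_coe hU)]
        exact condOn_apply_le _ _ _
    _ = _ := by rw [measure_ghRadius_ge_eq hAh0.ne' hAhfin.ne hb, mul_assoc]

lemma tsum_mul_condOn_le
    (hv : ∀ t : ℝ, 0 < t → 0 < Θ { T | t < heightT T } ∧ Θ { T | t < heightT T } < ∞)
    (hreg : Regenerative Θ) (ht : 0 < t) (hh : 0 < h) :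
    ∑' p : ℕ, p * condOn Θ {T | t < heightT T} {T | ZT T t h = p} ≤
      (Θ {T | t < heightT T})⁻¹ * Θ {T | h < heightT T} := by
  obtain ⟨hAh0, hAhfin⟩ := hv h hh
  have := isProbabilityMeasure_condHeightLaw hAh0.ne' hAhfin.ne
  have hlim : Tendsto (fun b => condHeightLaw Θ h (ghRadius ⁻¹' Ici b)ᶜ) atTop (𝓝 1) := by
    have hmono : Monotone fun b => ghRadius ⁻¹' Iio b := fun _ _ hbc _ hx => lt_of_lt_of_le hx hbc
    have hunion : (⋃ b, ghRadius ⁻¹' Iio b) = univ :=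
      eq_univ_of_forall fun x => mem_iUnion.mpr ⟨ghRadius x + 1, by simp⟩
    have hcompl : ∀ b, (ghRadius ⁻¹' Ici b)ᶜ = ghRadius ⁻¹' Iio b := fun b => by
      rw [← preimage_compl, compl_Ici]
    simpa [hcompl, hunion, Function.comp_def] using tendsto_measure_iUnion_atTop
      (μ := condHeightLaw Θ h) hmono
  rw [ENNReal.tsum_eq_iSup_nat]
  refine iSup_le fun n => le_of_tendsto ?_ ((eventually_gt_atTop h).mono fun b hb =>
    sum_mul_condOn_mul_pow_le hv hreg ht hh hb n)
  simpa using tendsto_finsetSum (Finset.range n) fun p _ =>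
    ENNReal.Tendsto.const_mul (ENNReal.Tendsto.pow (n := p) hlim) (Or.inl (by simp))

end Regenerative

theorem regenerative_mean_Z_le_general
    (Θ : MeasureTheory.Measure TT)
    (hv : ∀ t : ℝ, 0 < t → 0 < Θ { T | t < heightT T } ∧ Θ { T | t < heightT T } < ∞)
    (hreg : Regenerative Θ)
    (t h : ℝ) (ht : 0 < t) (hh : 0 < h) :
    ∫⁻ T, (ZT T t h : ℝ≥0∞) ∂Θ ≤ Θ { T | h < heightT T } := by
  obtain ⟨hAt0, hAtfin⟩ := hv t ht
  calc ∫⁻ T, (ZT T t h : ℝ≥0∞) ∂Θ ≤ ∑' p : ℕ, p * Θ {T | ZT T t h = p} :=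
        lintegral_natCast_le_tsum Θ _
    _ = Θ {T | t < heightT T} *
          ∑' p : ℕ, p * condOn Θ {T | t < heightT T} {T | ZT T t h = p} := by
        rw [← ENNReal.tsum_mul_left]
        exact tsum_congr (natCast_mul_measure_ZT_eq ht.ne' hAt0.ne' hAtfin.ne)
    _ ≤ Θ {T | t < heightT T} * ((Θ {T | t < heightT T})⁻¹ * Θ {T | h < heightT T}) :=
        mul_le_mul_right (tsum_mul_condOn_le hv hreg ht hh) _
    _ = Θ {T | h < heightT T} := by
        rw [← mul_assoc, ENNReal.mul_inv_cancel hAt0.ne' hAtfin.ne, one_mul]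

/-- **Proposition 3.2 (subcriticality).** Let `Θ` be an infinite measure on `𝕋` with
`Θ(H(𝒯)=0) = 0` and `0 < Θ(H(𝒯)>t) < ∞` for every `t>0`, satisfying the regenerative
property (R), and set `v(t) = Θ(H(𝒯)>t)`. Then for every `t>0` and `h>0`,
`∫ Z(t,t+h)(𝒯) Θ(d𝒯) ≤ v(h)`. -/
theorem regenerative_mean_Z_le
    (Θ : MeasureTheory.Measure TT)
    (hinf : Θ Set.univ = ∞)
    (h0 : Θ { T | heightT T = 0 } = 0)
    (hv : ∀ t : ℝ, 0 < t → 0 < Θ { T | t < heightT T } ∧ Θ { T | t < heightT T } < ∞)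
    (hreg : Regenerative Θ)
    (t h : ℝ) (ht : 0 < t) (hh : 0 < h) :
    ∫⁻ T, (ZT T t h : ℝ≥0∞) ∂Θ ≤ Θ { T | h < heightT T } :=
  regenerative_mean_Z_le_general Θ hv hreg t h ht hh

end
end
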